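/- Every coupling P ∈ Π_{a,b} ⊆ ℝ_+^{n×n} (with a, b ∈ Δ_n^*) admits a decomposition P = Σ_{i=1}^n λ_i q_i r_iᵀ where each q_i and r_i is a probability vector in ℝ_+^n, λ = (λ_1,…,λ_n) lies in the probability simplex Δ_n, and, if the weights are sorted decreasingly λ_1 ≥ λ_2 ≥ … ≥ λ_n, then λ_k ≤ 1/k for every k ∈ {1,…,n}. -/
import Mathlib


open scoped BigOperators

noncomputable section

/-- The transportation polytope `Π_{a,b}` of couplings between histograms `a` and `b`. -/
def transportPolytope {n : ℕ} (a b : Fin n → ℝ) : Set (Matrix (Fin n) (Fin n) ℝ) :=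
  {P | (∀ i j, 0 ≤ P i j) ∧ (∀ i, ∑ j, P i j = a i) ∧ (∀ j, ∑ i, P i j = b j)}

/-- Every coupling `P ∈ Π_{a,b}` admits a decomposition
`P = Σ_{k=1}^n λ_k q_k r_kᵀ` into convex combinations of outer products of probability
vectors, with the weights `λ` sorted decreasingly satisfying `λ_k ≤ 1/k`. -/
theorem coupling_decomposition {n : ℕ} (hn : 1 ≤ n) (a b : Fin n → ℝ)
    (ha_pos : ∀ i, 0 < a i) (ha_sum : ∑ i, a i = 1)
    (hb_pos : ∀ j, 0 < b j) (hb_sum : ∑ j, b j = 1)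
    (P : Matrix (Fin n) (Fin n) ℝ) (hP : P ∈ transportPolytope a b) :
    ∃ (lam : Fin n → ℝ) (q r : Fin n → Fin n → ℝ),
      (∀ k, 0 ≤ lam k) ∧ (∑ k, lam k = 1) ∧
      (∀ k, (∀ i, 0 ≤ q k i) ∧ ∑ i, q k i = 1) ∧
      (∀ k, (∀ j, 0 ≤ r k j) ∧ ∑ j, r k j = 1) ∧
      (∀ i j, P i j = ∑ k, lam k * (q k i * r k j)) ∧
      (∀ k l : Fin n, k ≤ l → lam l ≤ lam k) ∧
      (∀ k : Fin n, lam k ≤ 1 / ((k : ℕ) + 1)) := by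
  obtain ⟨hPnn, hProw, hPcol⟩ := hP
  set π : Equiv.Perm (Fin n) := Fin.revPerm.trans (Tuple.sort a) with hπ
  refine ⟨fun k => a (π k), fun k i => if i = π k then 1 else 0,
    fun k j => P (π k) j / a (π k), ?_, ?_, ?_, ?_, ?_, ?_, ?_⟩
  · exact fun k => (ha_pos _).le
  · rw [← ha_sum]; exact Equiv.sum_comp π a
  · intro k
    constructor
    · intro i; positivity
    · simp
  · intro k
    constructor
    · intro j; exact div_nonneg (hPnn _ _) (ha_pos _).le
    · rw [← Finset.sum_div, hProw, div_self (ha_pos _).ne']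
  · intro i j
    rw [show (∑ k, a (π k) * ((if i = π k then 1 else 0) * (P (π k) j / a (π k))))
        = ∑ m, a m * ((if i = m then 1 else 0) * (P m j / a m)) from
      Equiv.sum_comp π (fun m => a m * ((if i = m then 1 else 0) * (P m j / a m)))]
    rw [Finset.sum_eq_single i]
    · rw [if_pos rfl, one_mul, mul_div_cancel₀ _ (ha_pos i).ne']
    · intro m _ hm
      rw [if_neg (Ne.symm hm)]; ring
    · intro h; exact absurd (Finset.mem_univ i) h
  · intro k l hkl
    have hmono := Tuple.monotone_sort a
    have : l.rev ≤ k.rev := Fin.rev_le_rev.mpr hkl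
    exact hmono this
  · intro k
    have hpos : (0:ℝ) < (k : ℕ) + 1 := by positivity
    rw [le_div_iff₀ hpos]
    have hcard : (Finset.Iic k).card = (k : ℕ) + 1 := Fin.card_Iic k
    calc a (π k) * ((k:ℕ) + 1) = ∑ _i ∈ Finset.Iic k, a (π k) := by
          rw [Finset.sum_const, hcard]; push_cast; ring
      _ ≤ ∑ i ∈ Finset.Iic k, a (π i) := by
          refine Finset.sum_le_sum fun i hi => ?_
          have hik : i ≤ k := Finset.mem_Iic.mp hi
          exact Tuple.monotone_sort a (Fin.rev_le_rev.mpr hik)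
      _ ≤ ∑ i, a (π i) := by
          refine Finset.sum_le_sum_of_subset_of_nonneg (Finset.subset_univ _)
            fun i _ _ => (ha_pos _).le
      _ = 1 := by rw [Equiv.sum_comp π a, ha_sum]

end
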